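/- For each m ≥ 1 and n ≥ 0, the family of languages accepted by m-state realtime PDAs with at most n non-input pushdown symbols is strictly contained in the family for n+1 non-input pushdown symbols. -/
import Mathlib


/-- The binary input alphabet `{a, b}`. -/
inductive Bin : Type
  | a : Bin
  | b : Bin
deriving DecidableEq

/-- The language `L_n = { b^k a | 1 ≤ k ≤ n-1 }` over `{a, b}`. -/
def Ln (n : ℕ) : Set (List Bin) :=
  {w | ∃ k, 1 ≤ k ∧ k ≤ n - 1 ∧ w = List.replicate k Bin.b ++ [Bin.a]}

/-- The language `L_{m,n} = { b^k a | 1 ≤ k ≤ mn-1 }` over `{a, b}`. -/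
def Lmn (m n : ℕ) : Set (List Bin) :=
  {w | ∃ k, 1 ≤ k ∧ k ≤ m * n - 1 ∧ w = List.replicate k Bin.b ++ [Bin.a]}

/-- A realtime deterministic pushdown automaton (no ε-moves) over input
alphabet `A`: state set `Q`, pushdown alphabet `Γ`, partial transition
function `δ`, initial state `q0`, initial pushdown symbol `Z0`, and accepting
states `F`. -/
structure RPDA (A : Type) where
  Q : Type
  [instQ : Fintype Q]
  Γ : Type
  [instΓ : Fintype Γ]
  δ : Q → Γ → A → Option (Q × List Γ)
  q0 : Q
  Z0 : Γ
  F : Set Q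

attribute [instance] RPDA.instQ RPDA.instΓ

/-- `M.Steps c w c'` : from configuration `c` (state and pushdown content,
top of the pushdown being the head of the list) the automaton reads the input
string `w` and reaches configuration `c'`. -/
inductive RPDA.Steps {A : Type} (M : RPDA A) :
    M.Q × List M.Γ → List A → M.Q × List M.Γ → Prop
  | refl (c : M.Q × List M.Γ) : RPDA.Steps M c [] c
  | step {q : M.Q} {X : M.Γ} {γ : List M.Γ} {a : A} {p : M.Q} {w : List M.Γ}
      {ws : List A} {c : M.Q × List M.Γ} :
      M.δ q X a = some (p, w) → RPDA.Steps M (p, w ++ γ) ws c →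
      RPDA.Steps M (q, X :: γ) (a :: ws) c

/-- Acceptance by final state and empty pushdown. -/
def RPDA.Accepts {A : Type} (M : RPDA A) (w : List A) : Prop :=
  ∃ f ∈ M.F, M.Steps (M.q0, [M.Z0]) w (f, [])

/-- The family `(m,n)`-niRPDA of languages over the binary alphabet `{a, b}`
accepted by `m`-state realtime pushdown automata with at most `n` non-input
pushdown symbols, i.e. `|Γ| - |Σ| ≤ n` with `|Σ| = 2`. -/
def niRPDA (m n : ℕ) : Set (Set (List Bin)) :=
  {L | ∃ M : RPDA Bin, Fintype.card M.Q = m ∧ Fintype.card M.Γ - 2 ≤ n ∧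
        ∀ w : List Bin, M.Accepts w ↔ w ∈ L}
namespace RPDAProof

open RPDA

variable {A : Type} {M : RPDA A}

/-- Determinism of runs. -/
theorem steps_det {c c1 c2 : M.Q × List M.Γ} {w : List A}
    (h1 : M.Steps c w c1) (h2 : M.Steps c w c2) : c1 = c2 := by
  induction h1 generalizing c2 with
  | refl c => cases h2; rfl
  | step hδ h ih =>
    cases h2 with
    | step hδ' h' =>
      rw [hδ] at hδ'
      injection hδ' with h''
      obtain ⟨rfl, rfl⟩ := Prod.mk.injEq .. ▸ h''
      exact ih h'

theorem steps_nil {c c' : M.Q × List M.Γ} (h : M.Steps c [] c') : c = c' := by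
  cases h; rfl

theorem steps_trans {c d e : M.Q × List M.Γ} {u v : List A}
    (h1 : M.Steps c u d) (h2 : M.Steps d v e) : M.Steps c (u ++ v) e := by
  induction h1 with
  | refl c => exact h2
  | step hδ h ih => exact RPDA.Steps.step hδ (ih h2)

theorem steps_split {c e : M.Q × List M.Γ} {u v : List A}
    (h : M.Steps c (u ++ v) e) : ∃ d, M.Steps c u d ∧ M.Steps d v e := by
  induction u generalizing c with
  | nil => exact ⟨c, RPDA.Steps.refl c, h⟩
  | cons a u ih =>
    cases h with
    | step hδ h' =>
      obtain ⟨d, h1, h2⟩ := ih h'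
      exact ⟨d, RPDA.Steps.step hδ h1, h2⟩


/-- State component of the encoding of a counter value. -/
def eQ (m : ℕ) (hm : 0 < m) (k : ℕ) : Fin m := ⟨k % m, Nat.mod_lt _ hm⟩

/-- Symbol component of the encoding of a counter value. -/
def eX (m n k : ℕ) : Fin (n + 3) := ⟨k / m % (n + 3), Nat.mod_lt _ (by omega)⟩

theorem idx_lt (m n : ℕ) (q : Fin m) (X : Fin (n + 3)) :
    X.val * m + q.val < m * (n + 3) := by
  have h1 : X.val * m ≤ (n + 2) * m := Nat.mul_le_mul_right m (by omega)
  have h2 : q.val < m := q.isLt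
  nlinarith

theorem enc_idx (m n : ℕ) (hm : 0 < m) (k : ℕ) (hk : k < m * (n + 3)) :
    (eX m n k).val * m + (eQ m hm k).val = k := by
  have hdiv : k / m < n + 3 := by
    rw [Nat.div_lt_iff_lt_mul hm, Nat.mul_comm]; omega
  simp only [eQ, eX, Nat.mod_eq_of_lt hdiv]
  exact Nat.div_add_mod' k m

theorem enc_idx' (m n : ℕ) (hm : 0 < m) (k : ℕ) (hk : k < m * (n + 3)) :
    (eX m n k).val * m + (eQ m hm k).val = k := enc_idx m n hm k hk

/-- The chain machine: `m` states, `n+3` stack symbols, counting in a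
single stack cell plus state. -/
def Mach (m n : ℕ) (hm : 0 < m) : RPDA Bin where
  Q := Fin m
  Γ := Fin (n + 3)
  δ := fun q X c =>
    match c with
    | Bin.b =>
        if X.val * m + q.val + 1 ≤ m * (n + 3) - 1 then
          some (eQ m hm (X.val * m + q.val + 1), [eX m n (X.val * m + q.val + 1)])
        else none
    | Bin.a => if 1 ≤ X.val * m + q.val then some (q, []) else none
  q0 := eQ m hm 0
  Z0 := eX m n 0
  F := Set.univ

theorem mach_run (m n : ℕ) (hm : 0 < m) :
    ∀ k, k ≤ m * (n + 3) - 1 →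
      (Mach m n hm).Steps ((Mach m n hm).q0, [(Mach m n hm).Z0])
        (List.replicate k Bin.b) (eQ m hm k, [eX m n k]) := by
  intro k
  induction k with
  | zero => intro _; exact RPDA.Steps.refl _
  | succ k ih =>
    intro hk
    have hk' : k ≤ m * (n + 3) - 1 := by omega
    have hklt : k < m * (n + 3) := by
      have : 0 < m * (n + 3) := by positivity
      omega
    have hδ : (Mach m n hm).δ (eQ m hm k) (eX m n k) Bin.b
        = some (eQ m hm (k + 1), [eX m n (k + 1)]) := by
      show (if (eX m n k).val * m + (eQ m hm k).val + 1 ≤ m * (n + 3) - 1 then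
          some (eQ m hm ((eX m n k).val * m + (eQ m hm k).val + 1),
            [eX m n ((eX m n k).val * m + (eQ m hm k).val + 1)])
        else none) = some (eQ m hm (k + 1), [eX m n (k + 1)])
      rw [enc_idx m n hm k hklt, if_pos hk]
    have hstep : (Mach m n hm).Steps (eQ m hm k, [eX m n k]) [Bin.b]
        (eQ m hm (k + 1), [eX m n (k + 1)]) :=
      RPDA.Steps.step (γ := []) hδ (RPDA.Steps.refl _)
    have := steps_trans (ih hk') hstep
    rwa [← List.replicate_succ'] at this

theorem mach_sound (m n : ℕ) (hm : 0 < m) :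
    ∀ (w : List Bin) (q : Fin m) (X : Fin (n + 3)) (f : Fin m),
      (Mach m n hm).Steps (q, [X]) w (f, []) →
      ∃ k, 1 ≤ X.val * m + q.val + k ∧ X.val * m + q.val + k ≤ m * (n + 3) - 1 ∧
        w = List.replicate k Bin.b ++ [Bin.a] := by
  intro w
  induction w with
  | nil => intro q X f h; cases h
  | cons c ws ih =>
    intro q X f h
    cases h with
    | step hδ hs =>
      rename_i p w'
      cases c with
      | a =>
        have hδ' : (if 1 ≤ X.val * m + q.val then some (q, ([] : List (Fin (n+3)))) else none)
            = some (p, w') := hδ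
        by_cases hc : 1 ≤ X.val * m + q.val
        · rw [if_pos hc] at hδ'
          injection hδ' with h''
          obtain ⟨rfl, rfl⟩ := Prod.mk.injEq .. ▸ h''
          cases hs
          refine ⟨0, by omega, ?_, by simp⟩
          have := idx_lt m n q X
          omega
        · rw [if_neg hc] at hδ'; exact absurd hδ' (by simp)
      | b =>
        have hδ' : (if X.val * m + q.val + 1 ≤ m * (n + 3) - 1 then
            some (eQ m hm (X.val * m + q.val + 1), [eX m n (X.val * m + q.val + 1)])
          else none) = some (p, w') := hδ
        by_cases hc : X.val * m + q.val + 1 ≤ m * (n + 3) - 1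
        · rw [if_pos hc] at hδ'
          injection hδ' with h''
          obtain ⟨rfl, rfl⟩ := Prod.mk.injEq .. ▸ h''
          have hlt : X.val * m + q.val + 1 < m * (n + 3) := by
            have : 0 < m * (n + 3) := by positivity
            omega
          obtain ⟨k', h1, h2, h3⟩ := ih _ _ f hs
          rw [enc_idx m n hm _ hlt] at h1 h2
          exact ⟨k' + 1, by omega, by omega, by simp [h3, List.replicate_succ]⟩
        · rw [if_neg hc] at hδ'; exact absurd hδ' (by simp)

theorem mach_correct (m n : ℕ) (hm : 0 < m) :
    ∀ w : List Bin, (Mach m n hm).Accepts w ↔ w ∈ Lmn m (n + 3) := by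
  intro w
  constructor
  · rintro ⟨f, _, hst⟩
    obtain ⟨k, h1, h2, h3⟩ := mach_sound m n hm w _ _ f hst
    have h0 : ((Mach m n hm).Z0).val * m + ((Mach m n hm).q0).val = 0 :=
      enc_idx m n hm 0 (by positivity)
    exact ⟨k, by omega, by omega, h3⟩
  · rintro ⟨k, h1, h2, rfl⟩
    have hklt : k < m * (n + 3) := by
      have : 0 < m * (n + 3) := by positivity
      omega
    refine ⟨eQ m hm k, Set.mem_univ _, ?_⟩
    have hδ : (Mach m n hm).δ (eQ m hm k) (eX m n k) Bin.a = some (eQ m hm k, []) := by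
      show (if 1 ≤ (eX m n k).val * m + (eQ m hm k).val then
          some (eQ m hm k, ([] : List (Fin (n+3)))) else none) = some (eQ m hm k, [])
      rw [enc_idx m n hm k hklt, if_pos h1]
    have hstep : (Mach m n hm).Steps (eQ m hm k, [eX m n k]) [Bin.a] (eQ m hm k, []) :=
      RPDA.Steps.step (γ := []) hδ (RPDA.Steps.refl _)
    exact steps_trans (mach_run m n hm k h2) hstep

theorem lmn_mem (m n : ℕ) (hm : 1 ≤ m) : Lmn m (n + 3) ∈ niRPDA m (n + 1) := by
  refine ⟨Mach m n hm, ?_, ?_, mach_correct m n hm⟩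
  · simp [Mach]
  · simp [Mach]

theorem lmn_notMem (m n : ℕ) (hm : 1 ≤ m) : Lmn m (n + 3) ∉ niRPDA m n := by
  rintro ⟨M, hQ, hΓ, hacc⟩
  have hpos : n + 3 ≤ m * (n + 3) := Nat.le_mul_of_pos_left _ hm
  -- every count k < m*(n+3) is reached in a one-symbol-stack configuration
  have hex : ∀ k : Fin (m * (n + 3)), ∃ p : M.Q × M.Γ,
      M.Steps (M.q0, [M.Z0]) (List.replicate k.val Bin.b) (p.1, [p.2]) := by
    intro k
    rcases Nat.eq_zero_or_pos k.val with h0 | h1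
    · exact ⟨(M.q0, M.Z0), by rw [h0]; exact RPDA.Steps.refl _⟩
    · have hkN : k.val ≤ m * (n + 3) - 1 := by have := k.isLt; omega
      obtain ⟨f, _, hst⟩ := (hacc _).2 ⟨k.val, h1, hkN, rfl⟩
      obtain ⟨d, hd1, hd2⟩ := steps_split hst
      cases hd2 with
      | step hδ h' =>
        rename_i q X γ p w'
        have hceq := steps_nil h'
        have hγ : γ = [] :=
          (List.append_eq_nil_iff.mp (congrArg Prod.snd hceq)).2
        subst hγ
        exact ⟨(q, X), hd1⟩
  classical
  set φ : Fin (m * (n + 3)) → M.Q × M.Γ := fun k => (hex k).choose with hφdef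
  have hφ : ∀ k, M.Steps (M.q0, [M.Z0]) (List.replicate k.val Bin.b) ((φ k).1, [(φ k).2]) :=
    fun k => (hex k).choose_spec
  -- key: φ is injective
  have key : ∀ j k : Fin (m * (n + 3)), j.val < k.val → φ j ≠ φ k := by
    intro j k hlt heq
    have hdj := hφ j
    have hdk := hφ k
    rw [← heq] at hdk
    set d : M.Q × List M.Γ := ((φ j).1, [(φ j).2]) with hd
    set p := k.val - j.val with hp
    have hpk : j.val + p = k.val := by omega
    have hloop : M.Steps d (List.replicate p Bin.b) d := by
      have : List.replicate k.val Bin.b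
          = List.replicate j.val Bin.b ++ List.replicate p Bin.b := by
        rw [← List.replicate_add, hpk]
      rw [this] at hdk
      obtain ⟨e, h1, h2⟩ := steps_split hdk
      have : e = d := steps_det h1 hdj
      rwa [this] at h2
    have hiter : ∀ t, M.Steps (M.q0, [M.Z0]) (List.replicate (j.val + t * p) Bin.b) d := by
      intro t
      induction t with
      | zero => simpa using hdj
      | succ t ih =>
        have := steps_trans ih hloop
        rw [← List.replicate_add] at this
        have harith : j.val + t * p + p = j.val + (t + 1) * p := by ring
        rwa [harith] at this
    -- the machine accepts b^(j+1) a ; extract the tail behaviour from d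
    have hj1 : j.val + 1 ≤ m * (n + 3) - 1 := by have := k.isLt; omega
    obtain ⟨f, hf, hst⟩ := (hacc _).2 ⟨j.val + 1, by omega, hj1, rfl⟩
    have hw : List.replicate (j.val + 1) Bin.b ++ [Bin.a]
        = List.replicate j.val Bin.b ++ ([Bin.b] ++ [Bin.a]) := by
      rw [List.replicate_succ', List.append_assoc]
    rw [hw] at hst
    obtain ⟨e, he1, he2⟩ := steps_split hst
    have : e = d := steps_det he1 hdj
    rw [this] at he2
    -- now pump: accept b^(j + T*p + 1) a with T = m*(n+3)
    have hbig := steps_trans (hiter (m * (n + 3))) he2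
    rw [← List.append_assoc] at hbig
    have hrep : List.replicate (j.val + m * (n + 3) * p) Bin.b ++ [Bin.b]
        = List.replicate (j.val + m * (n + 3) * p + 1) Bin.b := by
      rw [List.replicate_succ']
    rw [hrep] at hbig
    have hmem : (List.replicate (j.val + m * (n + 3) * p + 1) Bin.b ++ [Bin.a])
        ∈ Lmn m (n + 3) := (hacc _).1 ⟨f, hf, hbig⟩
    obtain ⟨k', _, hk2, heq'⟩ := hmem
    have hlen := congrArg List.length heq'
    simp at hlen
    have hTle : m * (n + 3) ≤ m * (n + 3) * p := Nat.le_mul_of_pos_right _ (by omega)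
    omega
  have hinj : Function.Injective φ := by
    intro j k h
    by_contra hne
    rcases lt_trichotomy j k with h' | h' | h'
    · exact key j k h' h
    · exact hne h'
    · exact key k j h' h.symm
  have hcard := Fintype.card_le_of_injective φ hinj
  rw [Fintype.card_fin, Fintype.card_prod, hQ] at hcard
  have hΓ' : Fintype.card M.Γ ≤ n + 2 := by omega
  have h2 : m * Fintype.card M.Γ ≤ m * (n + 2) := Nat.mul_le_mul_left m hΓ'
  have h3 : m * (n + 3) = m * (n + 2) + m := by ring
  omega

end RPDAProof

/-- For each `m ≥ 1` and `n ≥ 0`, `(m,n)`-niRPDA is strictly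
contained in `(m,n+1)`-niRPDA. -/
theorem niRPDA_ssubset (m n : ℕ) (hm : 1 ≤ m) :
    niRPDA m n ⊂ niRPDA m (n + 1) := by
  have hsub : niRPDA m n ⊆ niRPDA m (n + 1) := by
    rintro L ⟨M, h1, h2, h3⟩
    exact ⟨M, h1, by omega, h3⟩
  rw [Set.ssubset_iff_of_subset hsub]
  exact ⟨Lmn m (n + 3), RPDAProof.lmn_mem m n hm, RPDAProof.lmn_notMem m n hm⟩
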